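/- Let a¹², a²¹, a²² be real numbers with a²² < 0, a¹²a²¹ < 0, and 4a¹²a²¹ + (a²²)² < 0. Then for every r > 0, the single-step sensory capacity C̄_Y(r) = 4(a²²)² r (a²¹ r − a¹²)² / ( (a¹²)² − 2a¹²a²¹ r + r((a²²)² + (a²¹)² r) )² satisfies C̄_Y(r) ≤ −16 a¹²a²¹ (a²²)² / ( (a²²)² − 4a¹²a²¹ )², with equality if and only if r = −a¹²/a²¹. (Optimal s-SC in the second parameter case of Sec. IV, attained at the same optimal noise-intensity ratio r* = −a¹²/a²¹ as the efficiency and the entropy production.) -/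
import Mathlib


/-- Steady-state single-step sensory capacity `C̄_Y` for the bipartite linear Langevin system
with `a¹¹ = 0`, as a function of the noise-intensity ratio `r = T^X / T^Y` (Eq. (A6)). -/
noncomputable def sCapY0 (a12 a21 a22 r : ℝ) : ℝ :=
  4 * a22 ^ 2 * r * (a21 * r - a12) ^ 2 /
    (a12 ^ 2 - 2 * a12 * a21 * r + r * (a22 ^ 2 + a21 ^ 2 * r)) ^ 2

/-- Optimal single-step sensory capacity in the second parameter case of Sec. IV: if
`4a¹²a²¹ + (a²²)² < 0` (together with the stability conditions with `a¹¹ = 0`), then for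
every `r > 0`, `C̄_Y(r) ≤ −16a¹²a²¹(a²²)² / ((a²²)² − 4a¹²a²¹)²`, with equality if and only
if `r = −a¹²/a²¹`. -/
theorem sCapY0_optimal_case_two (a12 a21 a22 : ℝ) (h22 : a22 < 0) (h1221 : a12 * a21 < 0)
    (hdisc : 4 * a12 * a21 + a22 ^ 2 < 0) :
    ∀ r : ℝ, 0 < r →
      sCapY0 a12 a21 a22 r ≤
          -(16 * a12 * a21 * a22 ^ 2) / (a22 ^ 2 - 4 * a12 * a21) ^ 2 ∧
        (sCapY0 a12 a21 a22 r =
            -(16 * a12 * a21 * a22 ^ 2) / (a22 ^ 2 - 4 * a12 * a21) ^ 2 ↔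
          r = -a12 / a21) := by
  intro r hr
  have hb : a21 ≠ 0 := by
    intro h; rw [h, mul_zero] at h1221; exact lt_irrefl 0 h1221
  have hcne : a22 ≠ 0 := ne_of_lt h22
  have hc2 : (0:ℝ) < a22 ^ 2 := by positivity
  have hD : 0 < a12 ^ 2 - 2 * a12 * a21 * r + r * (a22 ^ 2 + a21 ^ 2 * r) := by
    nlinarith [sq_nonneg (a12 - a21 * r), mul_pos hc2 hr]
  have hD2 : 0 < (a12 ^ 2 - 2 * a12 * a21 * r + r * (a22 ^ 2 + a21 ^ 2 * r)) ^ 2 := by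
    positivity
  have hK : 0 < a22 ^ 2 - 4 * a12 * a21 := by nlinarith
  have hK2 : 0 < (a22 ^ 2 - 4 * a12 * a21) ^ 2 := by positivity
  have hlead : 0 < -4 * a12 * a21 ^ 3 := by
    nlinarith [mul_pos (show (0:ℝ) < -(a12 * a21) by linarith)
      (show (0:ℝ) < a21 ^ 2 from by positivity)]
  have hid : 4 * (-4 * a12 * a21 ^ 3) *
      (-a22 ^ 4 * r - 4 * a12 * a21 * (a21 * r - a12) ^ 2) =
      (2 * (-4 * a12 * a21 ^ 3) * r + (8 * a12 ^ 2 * a21 ^ 2 - a22 ^ 4)) ^ 2 +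
        a22 ^ 4 * ((a22 ^ 2 - 4 * a12 * a21) * (-(4 * a12 * a21 + a22 ^ 2))) := by ring
  have h1 : 0 < (2 * (-4 * a12 * a21 ^ 3) * r + (8 * a12 ^ 2 * a21 ^ 2 - a22 ^ 4)) ^ 2 +
        a22 ^ 4 * ((a22 ^ 2 - 4 * a12 * a21) * (-(4 * a12 * a21 + a22 ^ 2))) := by
    have h2 : 0 < a22 ^ 4 * ((a22 ^ 2 - 4 * a12 * a21) * (-(4 * a12 * a21 + a22 ^ 2))) :=
      mul_pos (by positivity) (mul_pos hK (by linarith))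
    nlinarith [sq_nonneg (2 * (-4 * a12 * a21 ^ 3) * r + (8 * a12 ^ 2 * a21 ^ 2 - a22 ^ 4))]
  have hQ : 0 < -a22 ^ 4 * r - 4 * a12 * a21 * (a21 * r - a12) ^ 2 := by
    nlinarith [hid, h1, hlead]
  have key : -(16 * a12 * a21 * a22 ^ 2) *
      (a12 ^ 2 - 2 * a12 * a21 * r + r * (a22 ^ 2 + a21 ^ 2 * r)) ^ 2 -
      4 * a22 ^ 2 * r * (a21 * r - a12) ^ 2 * (a22 ^ 2 - 4 * a12 * a21) ^ 2 =
      4 * a22 ^ 2 * (a21 * r + a12) ^ 2 *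
        (-a22 ^ 4 * r - 4 * a12 * a21 * (a21 * r - a12) ^ 2) := by ring
  have hfac : 0 ≤ 4 * a22 ^ 2 * (a21 * r + a12) ^ 2 *
      (-a22 ^ 4 * r - 4 * a12 * a21 * (a21 * r - a12) ^ 2) := by positivity
  constructor
  · rw [sCapY0, div_le_div_iff₀ hD2 hK2]
    linarith [key, hfac]
  · rw [sCapY0, div_eq_div_iff hD2.ne' hK2.ne']
    constructor
    · intro h
      have h0 : 4 * a22 ^ 2 * (a21 * r + a12) ^ 2 *
          (-a22 ^ 4 * r - 4 * a12 * a21 * (a21 * r - a12) ^ 2) = 0 := by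
        linarith [key, h]
      have h1' : (a21 * r + a12) ^ 2 = 0 := by
        rcases mul_eq_zero.mp h0 with h' | h'
        · rcases mul_eq_zero.mp h' with h'' | h''
          · nlinarith
          · exact h''
        · exact absurd h' (ne_of_gt hQ)
      have h2 : a21 * r + a12 = 0 :=
        pow_eq_zero_iff (n := 2) (by norm_num) |>.mp h1'
      rw [eq_div_iff hb]
      linear_combination h2
    · intro h
      have hra : a21 * r + a12 = 0 := by
        rw [h]; field_simp; ring
      linear_combination (-(4 * a22 ^ 2 * (a21 * r + a12) *
        (-a22 ^ 4 * r - 4 * a12 * a21 * (a21 * r - a12) ^ 2))) * hra
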